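/- Let F = A^{1/m} be an m-th root Finsler metric on an open subset U ⊆ ℝⁿ such that for every x ∈ U the polynomial y ↦ A(x,y) is irreducible in ℝ[y¹,…,yⁿ]. If F has isotropic mean Berwald curvature, i.e. E_{jk}(x,y) = ((n+1)/2) c(x) F(x,y)^{−1} h_{jk}(x,y) for some smooth scalar function c on U, then c ≡ 0 and hence E = 0, i.e. F is a weakly Berwald metric. -/

import Mathlib

/-!
Positivity of `A(x, ·)` together with `A(x, -y) = (-1)ᵐ A(x, y)` forces `m` to be even, so `F` is
reversible. Then the spray coefficients are even in `y`, hence `E` is odd in `y` while the angular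
metric `h` is even; comparing the isotropy identity at `y` and `-y` makes both sides vanish. Finally
`h` cannot vanish identically, since `g_{jk} = F⁻² y_j y_k` would have rank one while being positive
definite in dimension `n ≥ 2`; so `c = 0`.
-/

open scoped BigOperators
open Matrix

noncomputable section

/-- Partial derivative of `f` in the `i`-th coordinate direction at `v`. -/
def pd {n : ℕ} (f : (Fin n → ℝ) → ℝ) (i : Fin n) (v : Fin n → ℝ) : ℝ :=
  fderiv ℝ f v (Pi.single i 1)

/-- `A(x,y) = a_{i₁⋯i_m}(x) y^{i₁}⋯y^{i_m}`. -/
def Amap {n m : ℕ} (a : (Fin m → Fin n) → (Fin n → ℝ) → ℝ) (x y : Fin n → ℝ) : ℝ :=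
  ∑ ι : Fin m → Fin n, a ι x * ∏ k, y (ι k)

/-- Fundamental tensor `g_{ij} = ½ ∂²(F²)/∂y^i∂y^j`. -/
def gmat {n : ℕ} (F : (Fin n → ℝ) → (Fin n → ℝ) → ℝ) (x y : Fin n → ℝ) :
    Matrix (Fin n) (Fin n) ℝ :=
  Matrix.of fun i j => (1/2) * pd (fun v => pd (fun w => (F x w)^2) j v) i y

/-- Spray coefficients `G^i = ¼ g^{il}[∂²(F²)/∂x^k∂y^l · y^k − ∂(F²)/∂x^l]`. -/
def sprayCoef {n : ℕ} (F : (Fin n → ℝ) → (Fin n → ℝ) → ℝ) (i : Fin n)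
    (x y : Fin n → ℝ) : ℝ :=
  (1/4) * ∑ l, (gmat F x y)⁻¹ i l *
    ((∑ k, pd (fun x' => pd (fun w => (F x' w)^2) l y) k x * y k)
      - pd (fun x' => (F x' y)^2) l x)

/-- Mean Berwald curvature `E_{jk} = ½ ∂³G^i/∂y^j∂y^k∂y^i` (summed over i). -/
def Ecurv {n : ℕ} (F : (Fin n → ℝ) → (Fin n → ℝ) → ℝ) (j k : Fin n)
    (x y : Fin n → ℝ) : ℝ :=
  (1/2) * ∑ i, pd (fun u => pd (fun v => pd (fun w => sprayCoef F i x w) i v) k u) j y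

/-- Lowered index `y_j = g_{jl} y^l`. -/
def lowerY {n : ℕ} (F : (Fin n → ℝ) → (Fin n → ℝ) → ℝ) (x y : Fin n → ℝ)
    (j : Fin n) : ℝ :=
  ∑ l, gmat F x y j l * y l

/-- Angular metric `h_{jk} = g_{jk} − F⁻² y_j y_k`. -/
def angular {n : ℕ} (F : (Fin n → ℝ) → (Fin n → ℝ) → ℝ) (x y : Fin n → ℝ)
    (j k : Fin n) : ℝ :=
  gmat F x y j k - ((F x y)^2)⁻¹ * lowerY F x y j * lowerY F x y k

theorem Matrix.PosDef.ne_smul_vecMulVec_self {ι : Type*} [Fintype ι] (hι : 1 < Fintype.card ι)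
    {M : Matrix ι ι ℝ} (hM : M.PosDef) (r : ℝ) (l : ι → ℝ) : M ≠ r • vecMulVec l l := by
  rintro rfl
  obtain ⟨v, hlv, hv⟩ := Submodule.exists_mem_ne_zero_of_ne_bot
    (LinearMap.ker_ne_bot_of_finrank_lt (f := dotProductBilin ℝ ℝ l) (by simpa using hι))
  have hpos := hM.dotProduct_mulVec_pos hv
  simp_all [smul_mulVec, vecMulVec_mulVec]

section PartialDerivative

variable {n : ℕ}

theorem pd_comp_neg (f : (Fin n → ℝ) → ℝ) (i : Fin n) (v : Fin n → ℝ) :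
    pd (fun w => f (-w)) i v = -pd f i (-v) := by
  have hcomp : (fun w => f (-w)) = f ∘ ContinuousLinearEquiv.neg ℝ (M := Fin n → ℝ) := rfl
  simp only [pd, hcomp, ContinuousLinearEquiv.comp_right_fderiv, ContinuousLinearMap.coe_comp,
    Function.comp_apply, ContinuousLinearEquiv.coe_coe, ContinuousLinearEquiv.neg_apply, map_neg]

theorem pd_neg (f : (Fin n → ℝ) → ℝ) (i : Fin n) (v : Fin n → ℝ) :
    pd (fun w => -f w) i v = -pd f i v := by
  simp [pd]

theorem pd_neg_of_even {f : (Fin n → ℝ) → ℝ} (hf : ∀ w, f (-w) = f w) (i : Fin n)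
    (v : Fin n → ℝ) : pd f i (-v) = -pd f i v := by
  have h := pd_comp_neg f i v
  rw [funext hf] at h
  linarith

theorem pd_neg_of_odd {f : (Fin n → ℝ) → ℝ} (hf : ∀ w, f (-w) = -f w) (i : Fin n)
    (v : Fin n → ℝ) : pd f i (-v) = pd f i v := by
  have h := pd_comp_neg f i v
  rw [funext hf, pd_neg] at h
  linarith

end PartialDerivative

section Amap

variable {n m : ℕ} (a : (Fin m → Fin n) → (Fin n → ℝ) → ℝ) (x : Fin n → ℝ)

theorem Amap_neg (y : Fin n → ℝ) : Amap a x (-y) = (-1) ^ m * Amap a x y := by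
  simp only [Amap, Finset.mul_sum, Pi.neg_apply, neg_eq_neg_one_mul (y _), Finset.prod_mul_distrib,
    Finset.prod_const, Finset.card_univ, Fintype.card_fin]
  exact Finset.sum_congr rfl fun ι _ => by ring

theorem even_of_Amap_pos_of_Amap_neg_pos {y : Fin n → ℝ} (hpos : 0 < Amap a x y)
    (hneg : 0 < Amap a x (-y)) : Even m := by
  by_contra hm
  rw [Amap_neg, (Nat.not_even_iff_odd.mp hm).neg_one_pow] at hneg
  linarith

end Amap

section Reversible

variable {n : ℕ} (F : (Fin n → ℝ) → (Fin n → ℝ) → ℝ) (hF : ∀ x y, F x (-y) = F x y)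
include hF

theorem gmat_neg (x y : Fin n → ℝ) : gmat F x (-y) = gmat F x y := by
  ext i j
  simp only [gmat, Matrix.of_apply]
  rw [pd_neg_of_odd (fun v => pd_neg_of_even (fun w => by rw [hF]) j v)]

theorem sprayCoef_neg (i : Fin n) (x y : Fin n → ℝ) : sprayCoef F i x (-y) = sprayCoef F i x y := by
  have hderiv : ∀ l x', pd (fun w => F x' w ^ 2) l (-y) = -pd (fun w => F x' w ^ 2) l y :=
    fun l x' => pd_neg_of_even (fun w => by rw [hF]) l y
  simp only [sprayCoef, gmat_neg F hF, hderiv, pd_neg, Pi.neg_apply, hF, neg_mul_neg]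

theorem Ecurv_neg (j k : Fin n) (x y : Fin n → ℝ) : Ecurv F j k x (-y) = -Ecurv F j k x y := by
  have hterm : ∀ i : Fin n,
      pd (fun u => pd (fun v => pd (fun w => sprayCoef F i x w) i v) k u) j (-y)
        = -pd (fun u => pd (fun v => pd (fun w => sprayCoef F i x w) i v) k u) j y :=
    fun i => pd_neg_of_even (fun u => pd_neg_of_odd
      (fun v => pd_neg_of_even (fun w => sprayCoef_neg F hF i x w) i v) k u) j y
  simp only [Ecurv, hterm, Finset.sum_neg_distrib, mul_neg]

theorem lowerY_neg (x y : Fin n → ℝ) (j : Fin n) : lowerY F x (-y) j = -lowerY F x y j := by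
  simp [lowerY, gmat_neg F hF]

theorem angular_neg (x y : Fin n → ℝ) (j k : Fin n) :
    angular F x (-y) j k = angular F x y j k := by
  simp [angular, gmat_neg F hF, hF, lowerY_neg F hF]

end Reversible

theorem exists_angular_ne_zero {n : ℕ} (hn : 2 ≤ n) {F : (Fin n → ℝ) → (Fin n → ℝ) → ℝ}
    {x y : Fin n → ℝ} (hg : (gmat F x y).PosDef) : ∃ j k, angular F x y j k ≠ 0 := by
  by_contra! h
  refine hg.ne_smul_vecMulVec_self (by simp; omega) (F x y ^ 2)⁻¹ (lowerY F x y) ?_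
  ext j k
  have hjk := h j k
  rw [angular, sub_eq_zero] at hjk
  simp [hjk, vecMulVec_apply, mul_assoc]

theorem mth_root_isotropic_mean_Berwald_general
    (n m : ℕ) (hn : 2 ≤ n)
    (U : Set (Fin n → ℝ))
    (a : (Fin m → Fin n) → (Fin n → ℝ) → ℝ)
    (hApos : ∀ x ∈ U, ∀ y : Fin n → ℝ, y ≠ 0 → 0 < Amap a x y)
    (F : (Fin n → ℝ) → (Fin n → ℝ) → ℝ)
    (hF : ∀ x y, F x y = (Amap a x y) ^ ((1:ℝ)/m))
    (hgpd : ∀ x ∈ U, ∀ y : Fin n → ℝ, y ≠ 0 → (gmat F x y).PosDef)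
    (c : (Fin n → ℝ) → ℝ)
    (hE : ∀ x ∈ U, ∀ y : Fin n → ℝ, y ≠ 0 → ∀ j k,
      Ecurv F j k x y = ((n + 1 : ℝ)/2) * c x * (F x y)⁻¹ * angular F x y j k) :
    (∀ x ∈ U, c x = 0) ∧
    (∀ x ∈ U, ∀ y : Fin n → ℝ, y ≠ 0 → ∀ j k, Ecurv F j k x y = 0) := by
  have : NeZero n := ⟨by omega⟩
  obtain ⟨y, hy⟩ := exists_ne (0 : Fin n → ℝ)
  rcases U.eq_empty_or_nonempty with rfl | ⟨x₀, hx₀⟩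
  · simp
  have hm : Even m := even_of_Amap_pos_of_Amap_neg_pos a x₀
    (hApos x₀ hx₀ y hy) (hApos x₀ hx₀ (-y) (neg_ne_zero.mpr hy))
  have hF_rev : ∀ x y, F x (-y) = F x y := fun x y => by
    rw [hF, hF, Amap_neg, hm.neg_one_pow, one_mul]
  have hboth : ∀ x ∈ U, ∀ y : Fin n → ℝ, y ≠ 0 → ∀ j k, Ecurv F j k x y = 0 ∧
      ((n + 1 : ℝ)/2) * c x * (F x y)⁻¹ * angular F x y j k = 0 := by
    intro x hx y hy j k
    have h₁ := hE x hx y hy j k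
    have h₂ := hE x hx (-y) (neg_ne_zero.mpr hy) j k
    rw [Ecurv_neg F hF_rev, hF_rev, angular_neg F hF_rev] at h₂
    constructor <;> linarith
  refine ⟨fun x hx => ?_, fun x hx y hy j k => (hboth x hx y hy j k).1⟩
  obtain ⟨j, k, hjk⟩ := exists_angular_ne_zero hn (hgpd x hx y hy)
  have hFpos : 0 < F x y := hF x y ▸ Real.rpow_pos_of_pos (hApos x hx y hy) _
  have hrhs := (hboth x hx y hy j k).2
  simp only [mul_eq_zero, inv_eq_zero, hFpos.ne', hjk, or_false] at hrhs
  exact hrhs.resolve_left (by positivity)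

/-- an m-th root metric with isotropic mean Berwald curvature
`E = ((n+1)/2) c F⁻¹ h` necessarily has `c ≡ 0`, i.e. it is weakly Berwald. -/
theorem mth_root_isotropic_mean_Berwald
    (n m : ℕ) (hn : 2 ≤ n) (hm : 3 ≤ m)
    (U : Set (Fin n → ℝ)) (hU : IsOpen U)
    (a : (Fin m → Fin n) → (Fin n → ℝ) → ℝ)
    (ha_smooth : ∀ ι, ContDiff ℝ (⊤:ℕ∞) (a ι))
    (ha_symm : ∀ (σ : Equiv.Perm (Fin m)) (ι : Fin m → Fin n) (x : Fin n → ℝ),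
      a (ι ∘ σ) x = a ι x)
    (hApos : ∀ x ∈ U, ∀ y : Fin n → ℝ, y ≠ 0 → 0 < Amap a x y)
    (F : (Fin n → ℝ) → (Fin n → ℝ) → ℝ)
    (hF : ∀ x y, F x y = (Amap a x y) ^ ((1:ℝ)/m))
    (hgpd : ∀ x ∈ U, ∀ y : Fin n → ℝ, y ≠ 0 → (gmat F x y).PosDef)
    (hirr : ∀ x ∈ U, ∃ P : MvPolynomial (Fin n) ℝ, Irreducible P ∧
      ∀ y : Fin n → ℝ, MvPolynomial.eval y P = Amap a x y)
    (c : (Fin n → ℝ) → ℝ) (hc : ContDiffOn ℝ (⊤:ℕ∞) c U)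
    (hE : ∀ x ∈ U, ∀ y : Fin n → ℝ, y ≠ 0 → ∀ j k,
      Ecurv F j k x y = ((n + 1 : ℝ)/2) * c x * (F x y)⁻¹ * angular F x y j k) :
    (∀ x ∈ U, c x = 0) ∧
    (∀ x ∈ U, ∀ y : Fin n → ℝ, y ≠ 0 → ∀ j k, Ecurv F j k x y = 0) :=
  mth_root_isotropic_mean_Berwald_general n m hn U a hApos F hF hgpd c hE
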